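/- For the asymmetric random walk with 0 < q < p, p + q = 1, for 0 < α < β < 1, setting x_N = ⌊αN⌋ and y_N = ⌊βN⌋, the probability that y_N is visited an odd number of times before exit converges to 1/(2 − (p − q)): lim_{N→∞} P_{x_N}(G(y_N) ≡ 1 mod 2) = 1/(2 − (p − q)). -/

import Mathlib

open Filter Topology

/-- Position of the nearest-neighbor walk after the steps `w` (`true` = one step right,
`false` = one step left), started from `x`. -/
def walkPos (x : ℤ) (w : List Bool) : ℤ :=
  x + (w.count true : ℤ) - (w.count false : ℤ)

/-- `w` is the step sequence of a trajectory on `{0, 1, …, N}` started at `x` and run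
exactly until the exit time `τ_N = T_0 ∧ T_N`: all positions strictly before the last
step lie strictly inside `(0, N)`, and the final position is `0` or `N`. -/
def IsExitPath (N : ℕ) (x : ℤ) (w : List Bool) : Prop :=
  (∀ k < w.length, 0 < walkPos x (w.take k) ∧ walkPos x (w.take k) < (N : ℤ)) ∧
    (walkPos x w = 0 ∨ walkPos x w = (N : ℤ))

/-- Probability weight of the step sequence `w` when each step goes right with
probability `p` and left with probability `1 - p`, independently. -/
noncomputable def wt (p : ℝ) (w : List Bool) : ℝ :=
  p ^ w.count true * (1 - p) ^ w.count false

/-- `prob N p x S` is the probability, for the walk on `{0, …, N}` with right-step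
probability `p` started at `x` and stopped at the exit time `τ_N`, that its stopped
trajectory (recorded as the step sequence up to time `τ_N`) satisfies `S`. -/
noncomputable def prob (N : ℕ) (p : ℝ) (x : ℤ) (S : List Bool → Prop) : ℝ :=
  ∑' w : List Bool, Set.indicator {w | IsExitPath N x w ∧ S w} (wt p) w

/-- Expectation of `f` of the stopped trajectory for the walk started at `x`. -/
noncomputable def expect (N : ℕ) (p : ℝ) (x : ℤ) (f : List Bool → ℝ) : ℝ :=
  ∑' w : List Bool, Set.indicator {w | IsExitPath N x w} (fun w => wt p w * f w) w

/-- Probability for the walk whose starting point is uniformly distributed on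
`{0, 1, …, N}`; the event `S` may depend on the starting point. -/
noncomputable def probUniform (N : ℕ) (p : ℝ) (S : ℤ → List Bool → Prop) : ℝ :=
  (∑ x ∈ Finset.range (N + 1), prob N p (x : ℤ) (S (x : ℤ))) / (N + 1)

/-- The set of sites visited by the stopped walk up to time `τ_N` (time `0` included). -/
def rangeSet (x : ℤ) (w : List Bool) : Finset ℤ :=
  (Finset.range (w.length + 1)).image fun k => walkPos x (w.take k)

/-- The range `R_N`: the number of distinct sites visited up to the exit time. -/
def rangeCount (x : ℤ) (w : List Bool) : ℕ := (rangeSet x w).card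

/-- The local time `G(y) = Σ_{k=0}^{τ_N} 1_{X_k = y}` of the stopped trajectory `w`. -/
def localTime (x y : ℤ) (w : List Bool) : ℕ :=
  ((Finset.range (w.length + 1)).filter fun k => walkPos x (w.take k) = y).card

/-- The event `T_y < τ_N`: the walk started at `x` visits `y` at some time
`k ≥ 1` strictly before the end of the stopped trajectory `w`. -/
def hitsBefore (x y : ℤ) (w : List Bool) : Prop :=
  ∃ k, 1 ≤ k ∧ k < w.length ∧ walkPos x (w.take k) = y

/-! Write `f x = P_x(G(y) odd)`. Then `f` vanishes at `0` and `N`, is harmonic for the walk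
away from `y`, and satisfies `f y = 1 - p f (y + 1) - q f (y - 1)` because each visit to `y`
flips the parity. A maximum principle makes this boundary problem uniquely solvable, and
gambler's-ruin expressions in `ρ = q / p` solve it: `f x = h x / (1 + r)`, where `h x` is the
probability of reaching `y` and `r` that of returning to `y`. Since `ρ < 1`, along
`x = ⌊αN⌋`, `y = ⌊βN⌋` we get `h x → 1` and `r → p ρ + q = 2q`, so `f x → 1 / (1 + 2q)`. -/

open scoped ENNReal

def walkStep (b : Bool) : ℤ := if b then 1 else -1

lemma walkPos_nil (x : ℤ) : walkPos x [] = x := by simp [walkPos]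

lemma walkPos_cons (x : ℤ) (b : Bool) (w : List Bool) :
    walkPos x (b :: w) = walkPos (x + walkStep b) w := by
  cases b <;> simp [walkPos, walkStep] <;> ring

lemma localTime_nil (x y : ℤ) : localTime x y [] = if x = y then 1 else 0 := by
  by_cases h : x = y <;> simp [localTime, walkPos_nil, h]

lemma localTime_cons (x y : ℤ) (b : Bool) (w : List Bool) :
    localTime x y (b :: w) = (if x = y then 1 else 0) + localTime (x + walkStep b) y w := by
  simp only [localTime, Finset.card_filter, List.length_cons]
  rw [Finset.sum_range_succ']
  simp only [List.take_succ_cons, walkPos_cons, List.take_zero, walkPos_nil]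
  omega

section ExitPath

variable {N : ℕ} {x : ℤ} {w : List Bool}

lemma isExitPath_nil_iff : IsExitPath N x [] ↔ x = 0 ∨ x = N := by
  simp [IsExitPath, walkPos_nil]

lemma IsExitPath.eq_nil (h : IsExitPath N x w) (hx : ¬(0 < x ∧ x < N)) : w = [] := by
  cases w with
  | nil => rfl
  | cons b t => exact absurd (by simpa [walkPos_nil] using h.1 0 (by simp)) hx

lemma isExitPath_cons_iff (b : Bool) (hx0 : 0 < x) (hxN : x < N) :
    IsExitPath N x (b :: w) ↔ IsExitPath N (x + walkStep b) w := by
  simp only [IsExitPath, List.length_cons, walkPos_cons]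
  refine and_congr_left' ⟨fun h k hk => ?_, fun h k hk => ?_⟩
  · simpa [walkPos_cons] using h (k + 1) (by omega)
  · cases k with
    | zero => simpa [walkPos_nil] using ⟨hx0, hxN⟩
    | succ k => simpa [walkPos_cons] using h k (by omega)

end ExitPath

lemma wt_nil (p : ℝ) : wt p [] = 1 := by simp [wt]

lemma wt_cons (p : ℝ) (b : Bool) (w : List Bool) :
    wt p (b :: w) = (if b then p else 1 - p) * wt p w := by
  cases b <;> simp [wt, pow_succ] <;> ring

lemma wt_nonneg {p : ℝ} (hp0 : 0 ≤ p) (hp1 : p ≤ 1) (w : List Bool) : 0 ≤ wt p w :=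
  mul_nonneg (pow_nonneg hp0 _) (pow_nonneg (by linarith) _)

lemma ENNReal.tsum_list {α : Type*} (F : List α → ℝ≥0∞) :
    ∑' w, F w = F [] + ∑' a, ∑' w, F (a :: w) := by
  rw [ENNReal.tsum_eq_add_tsum_ite [], ← ENNReal.tsum_prod]
  congr 1
  have hinj : Function.Injective fun aw : α × List α => aw.1 :: aw.2 :=
    fun _ _ h => by simpa [Prod.ext_iff] using h
  refine (hinj.tsum_eq ?_).symm.trans ?_
  · intro w hw
    cases w with
    | nil => simp at hw
    | cons a w => exact ⟨(a, w), rfl⟩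
  · simp

/-- The path sum of `prob`, taken in `ℝ≥0∞` where it always exists; once it is shown to be at
most `1`, `prob` is its real part (a real `tsum` would silently be `0` if not summable). -/
noncomputable def eprob (N : ℕ) (p : ℝ) (x : ℤ) (S : List Bool → Prop) : ℝ≥0∞ :=
  ∑' w, {w | IsExitPath N x w ∧ S w}.indicator (fun w => ENNReal.ofReal (wt p w)) w

section eprob

variable {N : ℕ} {p : ℝ} {x : ℤ} {S : List Bool → Prop}

lemma prob_eq_toReal_eprob (hp0 : 0 ≤ p) (hp1 : p ≤ 1) :
    prob N p x S = (eprob N p x S).toReal := by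
  rw [eprob, ENNReal.tsum_toReal_eq fun w => by
    by_cases hw : w ∈ {w | IsExitPath N x w ∧ S w} <;> simp [hw]]
  refine tsum_congr fun w => ?_
  rw [← Function.comp_apply (f := ENNReal.toReal), ← Set.indicator_comp_of_zero rfl]
  exact congrFun (Set.indicator_congr fun w _ =>
    (ENNReal.toReal_ofReal (wt_nonneg hp0 hp1 w)).symm) w

lemma eprob_eq_indicator_nil (hx : ¬(0 < x ∧ x < N)) :
    eprob N p x S = {w | IsExitPath N x w ∧ S w}.indicator (fun w => ENNReal.ofReal (wt p w)) [] :=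
  tsum_eq_single [] fun _ hw => Set.indicator_of_notMem (fun h => hw (h.1.eq_nil hx)) _

open scoped Classical in
lemma eprob_of_boundary (hx : x = 0 ∨ x = N) : eprob N p x S = if S [] then 1 else 0 := by
  rw [eprob_eq_indicator_nil (by omega)]
  by_cases hS : S [] <;> simp [isExitPath_nil_iff, hx, hS, wt_nil]

lemma eprob_step (hp0 : 0 ≤ p) (hp1 : p ≤ 1) (hx0 : 0 < x) (hxN : x < N) :
    eprob N p x S = ENNReal.ofReal p * eprob N p (x + 1) (fun w => S (true :: w))
      + ENNReal.ofReal (1 - p) * eprob N p (x - 1) (fun w => S (false :: w)) := by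
  have hcons : ∀ b w, {w | IsExitPath N x w ∧ S w}.indicator (fun w => ENNReal.ofReal (wt p w))
      (b :: w) = ENNReal.ofReal (if b then p else 1 - p) *
        {w | IsExitPath N (x + walkStep b) w ∧ S (b :: w)}.indicator
          (fun w => ENNReal.ofReal (wt p w)) w := by
    classical
    intro b w
    have hb : 0 ≤ if b then p else 1 - p := by split_ifs <;> linarith
    simp only [Set.indicator_apply, Set.mem_ofPred_eq, isExitPath_cons_iff b hx0 hxN, wt_cons,
      ENNReal.ofReal_mul hb]
    split_ifs <;> simp
  have hnil : [] ∉ {w | IsExitPath N x w ∧ S w} := fun h => by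
    rw [Set.mem_ofPred_eq, isExitPath_nil_iff] at h; omega
  rw [eprob, ENNReal.tsum_list, tsum_bool, Set.indicator_of_notMem hnil]
  simp only [hcons, ENNReal.tsum_mul_left]
  simp [eprob, walkStep, sub_eq_add_neg, add_comm]

lemma eprob_le_one_of_not_mem_interior (hx : ¬(0 < x ∧ x < N)) : eprob N p x S ≤ 1 := by
  rw [eprob_eq_indicator_nil hx]
  exact (Set.indicator_le_self _ _ _).trans (by simp [wt_nil])

lemma eprob_length_lt_le_one (hp0 : 0 ≤ p) (hp1 : p ≤ 1) (n : ℕ) :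
    ∀ (x : ℤ) (S : List Bool → Prop), eprob N p x (fun w => S w ∧ w.length < n) ≤ 1 := by
  induction n with
  | zero => simp [eprob]
  | succ n ih =>
    intro x S
    by_cases hx : 0 < x ∧ x < N
    · rw [eprob_step hp0 hp1 hx.1 hx.2]
      simp only [List.length_cons, add_lt_add_iff_right]
      calc _ ≤ ENNReal.ofReal p * 1 + ENNReal.ofReal (1 - p) * 1 := by gcongr <;> exact ih _ _
        _ = 1 := by rw [mul_one, mul_one, ← ENNReal.ofReal_add hp0 (by linarith)]; simp
    · exact eprob_le_one_of_not_mem_interior hx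

lemma eprob_le_one (hp0 : 0 ≤ p) (hp1 : p ≤ 1) : eprob N p x S ≤ 1 := by
  classical
  rw [eprob, ENNReal.tsum_eq_iSup_sum]
  refine iSup_le fun F => ?_
  set n := F.sup List.length + 1
  calc ∑ w ∈ F, {w | IsExitPath N x w ∧ S w}.indicator (fun w => ENNReal.ofReal (wt p w)) w
      = ∑ w ∈ F, {w | IsExitPath N x w ∧ S w ∧ w.length < n}.indicator
          (fun w => ENNReal.ofReal (wt p w)) w := by
        refine Finset.sum_congr rfl fun w hw => ?_
        have hlen : w.length < n := Nat.lt_succ_of_le (Finset.le_sup hw)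
        simp [Set.indicator_apply, hlen]
    _ ≤ eprob N p x (fun w => S w ∧ w.length < n) := ENNReal.sum_le_tsum F
    _ ≤ 1 := eprob_length_lt_le_one hp0 hp1 n x S

lemma eprob_ne_top (hp0 : 0 ≤ p) (hp1 : p ≤ 1) : eprob N p x S ≠ ⊤ :=
  ne_top_of_le_ne_top ENNReal.one_ne_top (eprob_le_one hp0 hp1)

end eprob

/-- A discrete maximum principle: take the rightmost maximiser `z` of `|d|` on `[0, N]`; if it
were interior, the inequality at `z` would force `|d (z + 1)| = max |d|`. -/
lemma eq_zero_of_abs_le_average {p : ℝ} (hp0 : 0 < p) (hp1 : p ≤ 1) {N : ℤ} {d : ℤ → ℝ}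
    (h0 : d 0 = 0) (hN : d N = 0)
    (hd : ∀ x, 0 < x → x < N → |d x| ≤ p * |d (x + 1)| + (1 - p) * |d (x - 1)|)
    {x : ℤ} (hx0 : 0 ≤ x) (hxN : x ≤ N) : d x = 0 := by
  have hI : (Finset.Icc 0 N).Nonempty := ⟨x, Finset.mem_Icc.2 ⟨hx0, hxN⟩⟩
  obtain ⟨m, hm, hmax⟩ := (Finset.Icc 0 N).exists_max_image (fun z => |d z|) hI
  set T := (Finset.Icc 0 N).filter fun z => |d z| = |d m|
  have hT : T.Nonempty := ⟨m, Finset.mem_filter.2 ⟨hm, rfl⟩⟩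
  obtain ⟨hz, hzmax⟩ := Finset.mem_filter.1 (T.max'_mem hT)
  set z := T.max' hT
  rw [Finset.mem_Icc] at hz
  suffices hM : |d m| = 0 from
    abs_eq_zero.1 (le_antisymm (hM ▸ hmax x (Finset.mem_Icc.2 ⟨hx0, hxN⟩)) (abs_nonneg _))
  by_cases hzb : z = 0 ∨ z = N
  · rw [← hzmax]; rcases hzb with h | h <;> simp [h, h0, hN]
  exfalso
  have hz0 : 0 < z := by omega
  have hzN : z < N := by omega
  have hright : |d (z + 1)| < |d m| := by
    refine lt_of_le_of_ne (hmax _ (Finset.mem_Icc.2 ⟨by omega, by omega⟩)) fun h => ?_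
    have := T.le_max' (z + 1) (Finset.mem_filter.2 ⟨Finset.mem_Icc.2 ⟨by omega, by omega⟩, h⟩)
    omega
  have hleft : |d (z - 1)| ≤ |d m| := hmax _ (Finset.mem_Icc.2 ⟨by omega, by omega⟩)
  have := hd z hz0 hzN
  nlinarith [mul_le_mul_of_nonneg_left hleft (by linarith : (0:ℝ) ≤ 1 - p)]

lemma abs_convex_comb_le {p : ℝ} (hp0 : 0 ≤ p) (hp1 : p ≤ 1) (a b : ℝ) :
    |p * a + (1 - p) * b| ≤ p * |a| + (1 - p) * |b| := by
  calc _ ≤ |p * a| + |(1 - p) * b| := abs_add_le _ _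
    _ = _ := by rw [abs_mul, abs_mul, abs_of_nonneg hp0, abs_of_nonneg (by linarith : 0 ≤ 1 - p)]

section prob

variable {N : ℕ} {p : ℝ} {x : ℤ} {S : List Bool → Prop}

lemma prob_step (hp0 : 0 ≤ p) (hp1 : p ≤ 1) (hx0 : 0 < x) (hxN : x < N) :
    prob N p x S = p * prob N p (x + 1) (fun w => S (true :: w))
      + (1 - p) * prob N p (x - 1) (fun w => S (false :: w)) := by
  simp only [prob_eq_toReal_eprob hp0 hp1]
  rw [eprob_step hp0 hp1 hx0 hxN, ENNReal.toReal_add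
    (ENNReal.mul_ne_top ENNReal.ofReal_ne_top (eprob_ne_top hp0 hp1))
    (ENNReal.mul_ne_top ENNReal.ofReal_ne_top (eprob_ne_top hp0 hp1)),
    ENNReal.toReal_mul, ENNReal.toReal_mul, ENNReal.toReal_ofReal hp0,
    ENNReal.toReal_ofReal (by linarith)]

open scoped Classical in
lemma prob_of_boundary (hp0 : 0 ≤ p) (hp1 : p ≤ 1) (hx : x = 0 ∨ x = N) :
    prob N p x S = if S [] then 1 else 0 := by
  rw [prob_eq_toReal_eprob hp0 hp1, eprob_of_boundary hx]
  split_ifs <;> simp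

lemma prob_add_prob_not (hp0 : 0 ≤ p) (hp1 : p ≤ 1) :
    prob N p x S + prob N p x (fun w => ¬ S w) = prob N p x (fun _ => True) := by
  classical
  simp only [prob_eq_toReal_eprob hp0 hp1]
  rw [← ENNReal.toReal_add (eprob_ne_top hp0 hp1) (eprob_ne_top hp0 hp1), eprob, eprob, eprob,
    ← ENNReal.tsum_add]
  congr 1
  refine tsum_congr fun w => ?_
  by_cases hS : S w <;> simp [Set.indicator_apply, hS]

lemma prob_true (hp0 : 0 < p) (hp1 : p < 1) (hx0 : 0 ≤ x) (hxN : x ≤ N) :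
    prob N p x (fun _ => True) = 1 := by
  have hb : ∀ z : ℤ, z = 0 ∨ z = N → prob N p z (fun _ => True) - 1 = 0 := fun z hz => by
    rw [prob_of_boundary hp0.le hp1.le hz, if_pos trivial, sub_self]
  refine sub_eq_zero.1 (eq_zero_of_abs_le_average (d := fun z => prob N p z (fun _ => True) - 1)
    hp0 hp1.le (hb 0 (Or.inl rfl)) (hb N (Or.inr rfl)) (fun z hz0 hzN => ?_) hx0 hxN)
  have := abs_convex_comb_le hp0.le hp1.le (prob N p (z + 1) (fun _ => True) - 1)
    (prob N p (z - 1) (fun _ => True) - 1)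
  rw [prob_step hp0.le hp1.le hz0 hzN]
  convert this using 2
  ring

lemma prob_not (hp0 : 0 < p) (hp1 : p < 1) (hx0 : 0 ≤ x) (hxN : x ≤ N) :
    prob N p x (fun w => ¬ S w) = 1 - prob N p x S := by
  linarith [prob_true (N := N) hp0 hp1 hx0 hxN,
    prob_add_prob_not (N := N) (x := x) (S := S) hp0.le hp1.le]

end prob

noncomputable def probOddVisits (N : ℕ) (p : ℝ) (x y : ℤ) : ℝ :=
  prob N p x fun w => localTime x y w % 2 = 1

section probOddVisits

variable {N : ℕ} {p : ℝ} {x y : ℤ}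

lemma probOddVisits_of_boundary (hp0 : 0 ≤ p) (hp1 : p ≤ 1) (hx : x = 0 ∨ x = N) (hxy : x ≠ y) :
    probOddVisits N p x y = 0 := by
  rw [probOddVisits, prob_of_boundary hp0 hp1 hx, localTime_nil, if_neg hxy]
  simp

lemma probOddVisits_step (hp0 : 0 ≤ p) (hp1 : p ≤ 1) (hx0 : 0 < x) (hxN : x < N) (hxy : x ≠ y) :
    probOddVisits N p x y = p * probOddVisits N p (x + 1) y
      + (1 - p) * probOddVisits N p (x - 1) y := by
  simp [probOddVisits, prob_step hp0 hp1 hx0 hxN, localTime_cons, hxy, walkStep, sub_eq_add_neg]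

lemma probOddVisits_step_self (hp0 : 0 < p) (hp1 : p < 1) (hy0 : 0 < y) (hyN : y < N) :
    probOddVisits N p y y = 1 - p * probOddVisits N p (y + 1) y
      - (1 - p) * probOddVisits N p (y - 1) y := by
  have hflip : ∀ n : ℕ, (1 + n) % 2 = 1 ↔ ¬ n % 2 = 1 := by omega
  simp only [probOddVisits, prob_step hp0.le hp1.le hy0 hyN, localTime_cons, if_pos, hflip]
  rw [prob_not hp0 hp1 (by omega) (by omega), prob_not hp0 hp1 (by omega) (by omega)]
  simp [walkStep, sub_eq_add_neg]
  ring

lemma probOddVisits_eq_of_solution (hp0 : 0 < p) (hp1 : p < 1) (hy0 : 0 < y) (hyN : y < N)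
    {g : ℤ → ℝ} (g0 : g 0 = 0) (gN : g N = 0)
    (hg : ∀ z : ℤ, 0 < z → z < N → z ≠ y → g z = p * g (z + 1) + (1 - p) * g (z - 1))
    (hgy : g y = 1 - p * g (y + 1) - (1 - p) * g (y - 1)) (hx0 : 0 ≤ x) (hxN : x ≤ N) :
    probOddVisits N p x y = g x := by
  refine sub_eq_zero.1 (eq_zero_of_abs_le_average (d := fun z => probOddVisits N p z y - g z)
    hp0 hp1.le ?_ ?_ (fun z hz0 hzN => ?_) hx0 hxN)
  · rw [probOddVisits_of_boundary hp0.le hp1.le (Or.inl rfl) hy0.ne, g0, sub_zero]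
  · rw [probOddVisits_of_boundary hp0.le hp1.le (Or.inr rfl) hyN.ne', gN, sub_zero]
  have h := abs_convex_comb_le hp0.le hp1.le (probOddVisits N p (z + 1) y - g (z + 1))
    (probOddVisits N p (z - 1) y - g (z - 1))
  by_cases hzy : z = y
  · subst hzy
    rw [← abs_neg] at h
    convert h using 2
    rw [probOddVisits_step_self hp0 hp1 hy0 hyN, hgy]
    ring
  · convert h using 2
    rw [probOddVisits_step hp0.le hp1.le hz0 hzN hzy, hg z hz0 hzN hzy]
    ring

end probOddVisits

noncomputable def rho (p : ℝ) : ℝ := (1 - p) / p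

/-- Gambler's ruin: from `x ≤ y`, the probability of reaching `y` before `0`. -/
noncomputable def hitProbBelow (p : ℝ) (y x : ℤ) : ℝ := (1 - rho p ^ x) / (1 - rho p ^ y)

/-- Gambler's ruin: from `x ≥ y`, the probability of reaching `y` before `N`. -/
noncomputable def hitProbAbove (p : ℝ) (N : ℕ) (y x : ℤ) : ℝ :=
  (rho p ^ x - rho p ^ (N : ℤ)) / (rho p ^ y - rho p ^ (N : ℤ))

noncomputable def hitProb (p : ℝ) (N : ℕ) (y x : ℤ) : ℝ :=
  if x ≤ y then hitProbBelow p y x else hitProbAbove p N y x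

noncomputable def returnProb (p : ℝ) (N : ℕ) (y : ℤ) : ℝ :=
  p * hitProbAbove p N y (y + 1) + (1 - p) * hitProbBelow p y (y - 1)

section GamblersRuin

variable {p : ℝ} {N : ℕ} {x y : ℤ}

lemma rho_pos (hp : 1 / 2 < p) (hp1 : p < 1) : 0 < rho p :=
  div_pos (by linarith) (by linarith)

lemma rho_lt_one (hp : 1 / 2 < p) : rho p < 1 :=
  (div_lt_one (by linarith)).2 (by linarith)

lemma mul_rho (hp0 : p ≠ 0) : p * rho p = 1 - p := by
  rw [rho]; field_simp

lemma rho_zpow_harmonic (hp0 : p ≠ 0) (hp1 : p ≠ 1) (x : ℤ) :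
    p * rho p ^ (x + 1) + (1 - p) * rho p ^ (x - 1) = rho p ^ x := by
  have hρ : rho p ≠ 0 := div_ne_zero (sub_ne_zero.2 (Ne.symm hp1)) hp0
  rw [zpow_add_one₀ hρ, zpow_sub_one₀ hρ]
  have h' : (1 - p) * (rho p)⁻¹ = p := by
    rw [rho, inv_div]; field_simp [sub_ne_zero.2 (Ne.symm hp1)]
  linear_combination rho p ^ x * mul_rho hp0 + rho p ^ x * h'

lemma hitProbBelow_harmonic (hp0 : p ≠ 0) (hp1 : p ≠ 1) (y x : ℤ) :
    hitProbBelow p y x = p * hitProbBelow p y (x + 1) + (1 - p) * hitProbBelow p y (x - 1) := by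
  simp only [hitProbBelow]
  linear_combination (1 / (1 - rho p ^ y)) * rho_zpow_harmonic hp0 hp1 x

lemma hitProbAbove_harmonic (hp0 : p ≠ 0) (hp1 : p ≠ 1) (N : ℕ) (y x : ℤ) :
    hitProbAbove p N y x
      = p * hitProbAbove p N y (x + 1) + (1 - p) * hitProbAbove p N y (x - 1) := by
  simp only [hitProbAbove]
  linear_combination (-1 / (rho p ^ y - rho p ^ (N : ℤ))) * rho_zpow_harmonic hp0 hp1 x

lemma hitProbAbove_add_one (hp0 : p ≠ 0) (hp1 : p ≠ 1) (N : ℕ) (y : ℤ) :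
    hitProbAbove p N y (y + 1) = (rho p - rho p ^ ((N : ℤ) - y)) / (1 - rho p ^ ((N : ℤ) - y)) := by
  have hρ : rho p ≠ 0 := div_ne_zero (sub_ne_zero.2 (Ne.symm hp1)) hp0
  have hN : rho p ^ (N : ℤ) = rho p ^ y * rho p ^ ((N : ℤ) - y) := by
    rw [← zpow_add₀ hρ, add_sub_cancel]
  rw [hitProbAbove, hN, zpow_add_one₀ hρ, ← mul_sub, ← mul_one_sub,
    mul_div_mul_left _ _ (zpow_ne_zero _ hρ)]

lemma hitProb_of_le (hxy : x ≤ y) : hitProb p N y x = hitProbBelow p y x := if_pos hxy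

lemma hitProb_of_ge (h : rho p ^ y ≠ 1) (h' : rho p ^ y ≠ rho p ^ (N : ℤ)) (hxy : y ≤ x) :
    hitProb p N y x = hitProbAbove p N y x := by
  rcases hxy.lt_or_eq with hlt | rfl
  · exact if_neg hlt.not_ge
  · rw [hitProb_of_le le_rfl, hitProbBelow, hitProbAbove, div_self (sub_ne_zero.2 (Ne.symm h)),
      div_self (sub_ne_zero.2 h')]

lemma hitProb_harmonic (hp0 : p ≠ 0) (hp1 : p ≠ 1) (h : rho p ^ y ≠ 1)
    (h' : rho p ^ y ≠ rho p ^ (N : ℤ)) (hxy : x ≠ y) :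
    hitProb p N y x = p * hitProb p N y (x + 1) + (1 - p) * hitProb p N y (x - 1) := by
  rcases hxy.lt_or_gt with hlt | hgt
  · rw [hitProb_of_le hlt.le, hitProb_of_le (by omega : x + 1 ≤ y),
      hitProb_of_le (by omega : x - 1 ≤ y)]
    exact hitProbBelow_harmonic hp0 hp1 y x
  · rw [hitProb_of_ge h h' hgt.le, hitProb_of_ge h h' (by omega : y ≤ x + 1),
      hitProb_of_ge h h' (by omega : y ≤ x - 1)]
    exact hitProbAbove_harmonic hp0 hp1 N y x

lemma rho_zpow_lt_one (hp : 1 / 2 < p) (hp1 : p < 1) (hy0 : 0 < y) : rho p ^ y < 1 :=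
  zpow_lt_one₀ (rho_pos hp hp1) (rho_lt_one hp) hy0

lemma rho_zpow_natCast_lt (hp : 1 / 2 < p) (hp1 : p < 1) (hyN : y < N) :
    rho p ^ (N : ℤ) < rho p ^ y :=
  zpow_lt_zpow_right_of_lt_one₀ (rho_pos hp hp1) (rho_lt_one hp) hyN

variable (hp : 1 / 2 < p) (hp1 : p < 1) (hy0 : 0 < y) (hyN : y < N)
include hp hp1 hy0 hyN

lemma returnProb_nonneg : 0 ≤ returnProb p N y := by
  have hρ0 := rho_pos hp hp1
  have hρ1 := rho_lt_one hp
  have habove : 0 ≤ hitProbAbove p N y (y + 1) :=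
    div_nonneg (sub_nonneg.2 (zpow_le_zpow_right_of_le_one₀ hρ0 hρ1.le (by omega)))
      (sub_nonneg.2 (rho_zpow_natCast_lt hp hp1 hyN).le)
  have hbelow : 0 ≤ hitProbBelow p y (y - 1) :=
    div_nonneg (sub_nonneg.2 (zpow_le_one₀ hρ0 hρ1.le (by omega)))
      (sub_nonneg.2 (rho_zpow_lt_one hp hp1 hy0).le)
  exact add_nonneg (mul_nonneg (by linarith) habove) (mul_nonneg (by linarith) hbelow)

lemma probOddVisits_eq (hx0 : 0 ≤ x) (hxN : x ≤ N) :
    probOddVisits N p x y = hitProb p N y x / (1 + returnProb p N y) := by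
  have hp0 : p ≠ 0 := by linarith
  have hp1' : p ≠ 1 := hp1.ne
  have h := (rho_zpow_lt_one hp hp1 hy0).ne
  have h' := (rho_zpow_natCast_lt hp hp1 hyN).ne'
  have hr : 1 + returnProb p N y ≠ 0 := by linarith [returnProb_nonneg hp hp1 hy0 hyN]
  refine probOddVisits_eq_of_solution (g := fun z => hitProb p N y z / (1 + returnProb p N y))
    (by linarith) hp1 hy0 hyN ?_ ?_ (fun z _ _ hzy => ?_) ?_ hx0 hxN
  · rw [hitProb_of_le hy0.le, hitProbBelow]; simp
  · rw [hitProb_of_ge h h' hyN.le, hitProbAbove]; simp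
  · rw [hitProb_harmonic hp0 hp1' h h' hzy]; ring
  · rw [hitProb_of_le le_rfl, hitProb_of_ge h h' (by omega), hitProb_of_le (by omega),
      hitProbBelow, div_self (sub_ne_zero.2 (Ne.symm h))]
    field_simp
    rw [returnProb]
    ring

end GamblersRuin

lemma tendsto_zpow_atTop_nhds_zero_of_lt_one {𝕜 : Type*} [Semifield 𝕜] [LinearOrder 𝕜]
    [IsStrictOrderedRing 𝕜] [ExistsAddOfLE 𝕜] [Archimedean 𝕜] [TopologicalSpace 𝕜]
    [OrderTopology 𝕜] {r : 𝕜} (h0 : 0 ≤ r) (h1 : r < 1) :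
    Tendsto (fun k : ℤ => r ^ k) atTop (𝓝 0) := by
  have htoNat : Tendsto Int.toNat atTop atTop :=
    tendsto_atTop_atTop.2 fun n => ⟨n, fun k hk => by omega⟩
  refine ((tendsto_pow_atTop_nhds_zero_of_lt_one h0 h1).comp htoNat).congr' ?_
  filter_upwards [eventually_ge_atTop 0] with k hk
  simp [← zpow_natCast, Int.toNat_of_nonneg hk]

lemma tendsto_floor_mul_natCast_atTop {c : ℝ} (hc : 0 < c) :
    Tendsto (fun N : ℕ => ⌊c * N⌋) atTop atTop :=
  tendsto_floor_atTop.comp (tendsto_natCast_atTop_atTop.const_mul_atTop hc)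

section Limits

variable {p : ℝ} (hp : 1 / 2 < p) (hp1 : p < 1) {ι : Type*} {l : Filter ι} {N : ι → ℕ}
  {x y : ι → ℤ}
include hp hp1

lemma tendsto_hitProbBelow (hx : Tendsto x l atTop) (hy : Tendsto y l atTop) :
    Tendsto (fun i => hitProbBelow p (y i) (x i)) l (𝓝 1) := by
  have h := tendsto_zpow_atTop_nhds_zero_of_lt_one (rho_pos hp hp1).le (rho_lt_one hp)
  have := ((h.comp hx).const_sub 1).div ((h.comp hy).const_sub 1) (by norm_num)
  rwa [sub_zero, div_one] at this

lemma tendsto_returnProb (hy : Tendsto y l atTop)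
    (hNy : Tendsto (fun i => (N i : ℤ) - y i) l atTop) :
    Tendsto (fun i => returnProb p (N i) (y i)) l (𝓝 (2 * (1 - p))) := by
  have hp0 : p ≠ 0 := by linarith
  have h := tendsto_zpow_atTop_nhds_zero_of_lt_one (rho_pos hp hp1).le (rho_lt_one hp)
  have habove : Tendsto (fun i => hitProbAbove p (N i) (y i) (y i + 1)) l (𝓝 (rho p)) := by
    simp only [hitProbAbove_add_one hp0 hp1.ne]
    have := ((h.comp hNy).const_sub (rho p)).div ((h.comp hNy).const_sub 1) (by norm_num)
    rwa [sub_zero, sub_zero, div_one] at this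
  have hbelow := tendsto_hitProbBelow hp hp1 (tendsto_atTop_add_const_right l (-1) hy) hy
  have := (habove.const_mul p).add (hbelow.const_mul (1 - p))
  rw [mul_rho hp0] at this
  convert this using 2
  · simp [returnProb, sub_eq_add_neg]
  · ring

end Limits

/-- Proposition 4.3 (asymmetric case): for the walk with fixed `0 < q < p`, `p + q = 1`,
started at `⌊αN⌋` with `α < β`, the probability that `⌊βN⌋` is visited an odd number of
times before exit tends to `1/(2 - (p - q))`. -/
theorem odd_parity_asymmetric (p q α β : ℝ) (hq : 0 < q) (hpq : q < p)
    (hsum : p + q = 1) (hα0 : 0 < α) (hαβ : α < β) (hβ1 : β < 1) :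
    Tendsto (fun N : ℕ =>
        prob N p ⌊α * (N : ℝ)⌋
          fun w => localTime ⌊α * (N : ℝ)⌋ ⌊β * (N : ℝ)⌋ w % 2 = 1)
      atTop (𝓝 (1 / (2 - (p - q)))) := by
  obtain rfl : q = 1 - p := by linarith
  have hp : 1 / 2 < p := by linarith
  have hp1 : p < 1 := by linarith
  have hx := tendsto_floor_mul_natCast_atTop hα0
  have hy := tendsto_floor_mul_natCast_atTop (hα0.trans hαβ)
  have hNy : Tendsto (fun N : ℕ => (N : ℤ) - ⌊β * N⌋) atTop atTop := by
    refine tendsto_atTop_mono (fun N => ?_) (tendsto_floor_mul_natCast_atTop (sub_pos.2 hβ1))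
    have := Int.le_floor_add ((1 - β) * N) (β * N)
    rw [show (1 - β) * N + β * N = ((N : ℤ) : ℝ) by push_cast; ring, Int.floor_intCast] at this
    omega
  have hlim := (tendsto_hitProbBelow hp hp1 hx hy).div
    ((tendsto_returnProb hp hp1 hy hNy).const_add 1) (by linarith)
  rw [show 2 - (p - (1 - p)) = 1 + 2 * (1 - p) by ring]
  refine hlim.congr' ?_
  filter_upwards [hx.eventually_ge_atTop 0, hy.eventually_gt_atTop 0, hNy.eventually_gt_atTop 0]
    with N hx0 hy0 hyN
  have hxy : ⌊α * N⌋ ≤ ⌊β * N⌋ := Int.floor_le_floor (by gcongr)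
  rw [Pi.div_apply, ← hitProb_of_le hxy]
  exact (probOddVisits_eq hp hp1 hy0 (by omega) hx0 (by omega)).symm
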